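/- Let $R$ be an irreducible simply-laced root system, $\alpha$ a simple root with minuscule fundamental weight $\varpi_\alpha$, $I = S\setminus\{\alpha\}$, and let $w \in W$ satisfy $w(I) \subseteq R^+$. Fix a reduced decomposition $w = s_{\beta_1} s_{\beta_2} \cdots s_{\beta_r}$ into reflections at simple roots $\beta_i$, and set $v_i := s_{\beta_i}s_{\beta_{i-1}}\cdots s_{\beta_1}$ and $\gamma_i := v_i(\beta_1)$ for $1 \le i \le r$. Then each $\gamma_i$ is a negative root and $\gamma_{i+1} \le \gamma_i$ for all $1 \le i \le r-1$, where $\le$ is the usual partial order on the root lattice (difference is a non-negative combination of simple roots). -/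

import Mathlib

open scoped RealInnerProductSpace

noncomputable section

variable {V : Type} [NormedAddCommGroup V] [InnerProductSpace ℝ V]

/-- The reflection of `V` in the hyperplane orthogonal to `α`
(the identity map when `α = 0`). -/
def reflVec (α : V) : V ≃ₗ[ℝ] V where
  toFun x := x - (2 * ⟪x, α⟫ / ⟪α, α⟫) • α
  invFun x := x - (2 * ⟪x, α⟫ / ⟪α, α⟫) • α
  map_add' x y := by
    have h : 2 * ⟪x + y, α⟫ / ⟪α, α⟫ = 2 * ⟪x, α⟫ / ⟪α, α⟫ + 2 * ⟪y, α⟫ / ⟪α, α⟫ := by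
      rw [inner_add_left]; ring
    rw [h, add_smul]; abel
  map_smul' r x := by
    have h : 2 * ⟪r • x, α⟫ / ⟪α, α⟫ = r * (2 * ⟪x, α⟫ / ⟪α, α⟫) := by
      rw [real_inner_smul_left]; ring
    simp only [RingHom.id_apply]
    rw [h, mul_smul, smul_sub]
  left_inv x := by
    dsimp only
    by_cases h : (⟪α, α⟫ : ℝ) = 0
    · simp [inner_self_eq_zero.mp h]
    · have h2 : 2 * ⟪x - (2 * ⟪x, α⟫ / ⟪α, α⟫) • α, α⟫ / ⟪α, α⟫
          = -(2 * ⟪x, α⟫ / ⟪α, α⟫) := by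
        rw [inner_sub_left, real_inner_smul_left]
        field_simp
        ring
      rw [h2, neg_smul, sub_neg_eq_add, sub_add_cancel]
  right_inv x := by
    dsimp only
    by_cases h : (⟪α, α⟫ : ℝ) = 0
    · simp [inner_self_eq_zero.mp h]
    · have h2 : 2 * ⟪x - (2 * ⟪x, α⟫ / ⟪α, α⟫) • α, α⟫ / ⟪α, α⟫
          = -(2 * ⟪x, α⟫ / ⟪α, α⟫) := by
        rw [inner_sub_left, real_inner_smul_left]
        field_simp
        ring
      rw [h2, neg_smul, sub_neg_eq_add, sub_add_cancel]

/-- The pairing `⟨x, y^∨⟩ = 2(x,y)/(y,y)` of a vector with the coroot of `y`. -/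
def cpair (x y : V) : ℝ := 2 * ⟪x, y⟫ / ⟪y, y⟫

/-- A (reduced, crystallographic) root system in a real inner product space,
together with a chosen system of simple roots. -/
structure RootSystemData (V : Type) [NormedAddCommGroup V] [InnerProductSpace ℝ V] where
  roots : Finset V
  simples : Finset V
  simples_subset : simples ⊆ roots
  root_ne_zero : ∀ α ∈ roots, α ≠ 0
  pairing_int : ∀ α ∈ roots, ∀ β ∈ roots, ∃ n : ℤ, (n : ℝ) = cpair α β
  reflect_mem : ∀ α ∈ roots, ∀ β ∈ roots, reflVec α β ∈ roots
  reduced : ∀ α ∈ roots, ∀ t : ℝ, t • α ∈ roots → t = 1 ∨ t = -1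
  simples_indep : LinearIndependent ℝ (fun a : {x // x ∈ simples} => (a : V))
  root_pos_or_neg : ∀ β ∈ roots,
    (∃ c : V → ℕ, β = ∑ α ∈ simples, (c α : ℝ) • α) ∨
    (∃ c : V → ℕ, -β = ∑ α ∈ simples, (c α : ℝ) • α)

namespace RootSystemData

/-- `v` is a non-negative integer combination of the elements of `I`. -/
def IsPosCombOf (P : RootSystemData V) (I : Finset V) (v : V) : Prop :=
  ∃ c : V → ℕ, v = ∑ α ∈ I, (c α : ℝ) • α

/-- `v` is a non-negative integer combination of the simple roots. -/
def IsPosComb (P : RootSystemData V) (v : V) : Prop := P.IsPosCombOf P.simples v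

/-- The set of positive roots. -/
def Pos (P : RootSystemData V) : Set V := {β | β ∈ P.roots ∧ P.IsPosComb β}

/-- The set of negative roots. -/
def Neg (P : RootSystemData V) : Set V := {β | -β ∈ P.Pos}

/-- The positive roots lying in the root subsystem generated by `I`. -/
def PosOf (P : RootSystemData V) (I : Finset V) : Set V := {β | β ∈ P.roots ∧ P.IsPosCombOf I β}

/-- The half sum of the positive roots. -/
def rho (P : RootSystemData V) : V := (2 : ℝ)⁻¹ • ∑ᶠ β ∈ P.Pos, β

/-- The half sum of the positive roots in the root subsystem generated by `I`. -/
def rhoOf (P : RootSystemData V) (I : Finset V) : V := (2 : ℝ)⁻¹ • ∑ᶠ β ∈ P.PosOf I, β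

/-- The parabolic subgroup of the Weyl group generated by the reflections
in the elements of `I`. -/
def WeylOf (P : RootSystemData V) (I : Finset V) : Subgroup (V ≃ₗ[ℝ] V) :=
  Subgroup.closure (reflVec '' (I : Set V))

/-- The Weyl group, generated by the simple reflections. -/
def Weyl (P : RootSystemData V) : Subgroup (V ≃ₗ[ℝ] V) := P.WeylOf P.simples

/-- `l` is a word with letters in `I` whose associated product of reflections is `w`. -/
def IsWordOf (P : RootSystemData V) (I : Finset V) (l : List V) (w : V ≃ₗ[ℝ] V) : Prop :=
  (∀ α ∈ l, α ∈ I) ∧ (l.map reflVec).prod = w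

/-- The length of `w` with respect to the reflections in the elements of `I`. -/
def lengthOf (P : RootSystemData V) (I : Finset V) (w : V ≃ₗ[ℝ] V) : ℕ :=
  sInf {n | ∃ l, P.IsWordOf I l w ∧ l.length = n}

/-- The Coxeter length of `w` with respect to the simple reflections. -/
def length (P : RootSystemData V) (w : V ≃ₗ[ℝ] V) : ℕ := P.lengthOf P.simples w

/-- `l` is a reduced decomposition of `w` into simple reflections. -/
def IsReducedWord (P : RootSystemData V) (l : List V) (w : V ≃ₗ[ℝ] V) : Prop :=
  P.IsWordOf P.simples l w ∧ l.length = P.length w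

/-- The partial order on the root lattice: `x ≤ y` iff `y - x` is a non-negative
integer combination of simple roots. -/
def rootLE (P : RootSystemData V) (x y : V) : Prop := P.IsPosComb (y - x)

/-- The root system is simply laced: all roots have the same length. -/
def SimplyLaced (P : RootSystemData V) : Prop := ∀ α ∈ P.roots, ∀ β ∈ P.roots, ⟪α, α⟫ = ⟪β, β⟫

/-- The root system is irreducible: it admits no decomposition into two
non-empty mutually orthogonal parts. -/
def Irred (P : RootSystemData V) : Prop :=
  ∀ A B : Set V, (P.roots : Set V) ⊆ A ∪ B →
    (∀ a ∈ A ∩ (P.roots : Set V), ∀ b ∈ B ∩ (P.roots : Set V), ⟪a, b⟫ = 0) →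
    A ∩ (P.roots : Set V) = ∅ ∨ B ∩ (P.roots : Set V) = ∅

/-- `ϖ` is the fundamental weight associated with the simple root `α`. -/
def IsFundamentalWeight (P : RootSystemData V) (α ϖ : V) : Prop :=
  cpair ϖ α = 1 ∧ ∀ γ ∈ P.simples, γ ≠ α → cpair ϖ γ = 0

/-- The weight `ϖ` is minuscule: it pairs with every positive coroot by at most `1`. -/
def IsMinusculeWeight (P : RootSystemData V) (ϖ : V) : Prop := ∀ β ∈ P.Pos, cpair ϖ β ≤ 1

/-- The support of `w`: the set of simple roots whose reflections occur in a
reduced decomposition of `w`. -/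
def Supp (P : RootSystemData V) (w : V ≃ₗ[ℝ] V) : Set V :=
  {δ | δ ∈ P.simples ∧ ∃ l, P.IsReducedWord l w ∧ δ ∈ l}

end RootSystemData


/-!
Write `w = s_{β_1} ⋯ s_{β_r}` and `u_i = s_{β_1} ⋯ s_{β_i}`, so that `γ_i = u_i⁻¹ β_1`.
Every prefix of a reduced word is reduced, and `u_i⁻¹` sends the first letter `β_1` of `u_i`
to a negative root; this is the first claim.

For the second, `γ_{i+1} = s_{β_{i+1}} γ_i = γ_i - ⟨γ_i, β_{i+1}^∨⟩ β_{i+1}` and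
`⟨γ_i, β_{i+1}^∨⟩ = ⟨β_1, δ^∨⟩` with `δ = u_i β_{i+1}`. Both `β_1` and `δ` are positive roots
that `w⁻¹` makes negative. For such a root `β`, the positive root `ε = -w⁻¹ β` satisfies
`w ε < 0`; since `w` is positive on `I`, `ε` must involve `α`, and minusculity forces its
`α`-coefficient to be `1`, i.e. `⟨ϖ, ε^∨⟩ = 1`. So two such roots never sum to a root (the sum
would pair with `ϖ` to `2`), which in a simply laced system means `⟨β_1, δ^∨⟩ ≥ 0`.
-/

lemma reflVec_apply (α x : V) : reflVec α x = x - cpair x α • α := rfl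

lemma reflVec_reflVec (α x : V) : reflVec α (reflVec α x) = x := (reflVec α).symm_apply_apply x

lemma reflVec_inv (α : V) : (reflVec α)⁻¹ = reflVec α := rfl

lemma reflVec_mul_self (α : V) : reflVec α * reflVec α = 1 :=
  mul_eq_one_iff_eq_inv.mpr (reflVec_inv α).symm

lemma reflVec_self {α : V} (h : α ≠ 0) : reflVec α α = -α := by
  rw [reflVec_apply, cpair, mul_div_assoc, div_self (inner_self_ne_zero.mpr h), mul_one,
    two_smul]
  abel

lemma inner_reflVec_reflVec (α x y : V) : ⟪reflVec α x, reflVec α y⟫ = ⟪x, y⟫ := by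
  by_cases h : α = 0
  · simp [reflVec_apply, h]
  · have hq : ⟪α, α⟫ ≠ 0 := inner_self_ne_zero.mpr h
    simp only [reflVec_apply, cpair, inner_sub_left, inner_sub_right, real_inner_smul_left,
      real_inner_smul_right, real_inner_comm α]
    field_simp
    ring

lemma cpair_map {u : V ≃ₗ[ℝ] V} (hu : ∀ x y, ⟪u x, u y⟫ = ⟪x, y⟫) (x y : V) :
    cpair (u x) (u y) = cpair x y := by
  rw [cpair, cpair, hu, hu]

lemma reflVec_map {u : V ≃ₗ[ℝ] V} (hu : ∀ x y, ⟪u x, u y⟫ = ⟪x, y⟫) (γ : V) :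
    reflVec (u γ) = u * reflVec γ * u⁻¹ := by
  ext x
  obtain ⟨y, rfl⟩ := u.surjective x
  simp only [LinearEquiv.mul_apply, reflVec_apply, map_sub, map_smul]
  rw [LinearEquiv.coe_inv, LinearEquiv.symm_apply_apply, cpair_map hu]

lemma neg_two_le_cpair {x y : V} (hq : ⟪x, x⟫ = ⟪y, y⟫) (hy : y ≠ 0) : -2 ≤ cpair x y := by
  have hs : (0 : ℝ) ≤ ⟪x + y, x + y⟫ := real_inner_self_nonneg
  rw [inner_add_left, inner_add_right, inner_add_right, real_inner_comm x y] at hs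
  rw [cpair, le_div_iff₀ (real_inner_self_pos.mpr hy)]
  linarith

lemma eq_neg_of_cpair_eq_neg_two {x y : V} (hq : ⟪x, x⟫ = ⟪y, y⟫) (hy : y ≠ 0)
    (h : cpair x y = -2) : x = -y := by
  rw [cpair, div_eq_iff (inner_self_ne_zero.mpr hy)] at h
  have hs : ⟪x + y, x + y⟫ = 0 := by
    rw [inner_add_left, inner_add_right, inner_add_right, real_inner_comm x y]
    linarith
  exact eq_neg_of_add_eq_zero_left (inner_self_eq_zero.mp hs)

def wordProd (m : List V) : V ≃ₗ[ℝ] V := (m.map reflVec).prod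

@[simp]
lemma wordProd_nil : wordProd ([] : List V) = 1 := rfl

@[simp]
lemma wordProd_cons (a : V) (m : List V) : wordProd (a :: m) = reflVec a * wordProd m := by
  simp [wordProd]

@[simp]
lemma wordProd_append (m₁ m₂ : List V) : wordProd (m₁ ++ m₂) = wordProd m₁ * wordProd m₂ := by
  simp [wordProd]

lemma wordProd_reverse (m : List V) : wordProd m.reverse = (wordProd m)⁻¹ := by
  induction m with
  | nil => simp
  | cons a t ih => simp [ih, reflVec_inv]

lemma inner_wordProd_wordProd (m : List V) (x y : V) :
    ⟪wordProd m x, wordProd m y⟫ = ⟪x, y⟫ := by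
  induction m with
  | nil => rfl
  | cons a t ih => simp only [wordProd_cons, LinearEquiv.mul_apply, inner_reflVec_reflVec, ih]

namespace RootSystemData

variable (P : RootSystemData V)

lemma coeff_eq_of_sum_eq {c e : V → ℝ}
    (h : ∑ δ ∈ P.simples, c δ • δ = ∑ δ ∈ P.simples, e δ • δ) {δ : V} (hδ : δ ∈ P.simples) :
    c δ = e δ := by
  have hs : ∑ i : P.simples, (c i - e i) • (i : V) = 0 := by
    simp only [sub_smul, Finset.sum_sub_distrib]
    rw [Finset.sum_coe_sort P.simples (fun δ => c δ • δ),
      Finset.sum_coe_sort P.simples (fun δ => e δ • δ), h, sub_self]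
  exact sub_eq_zero.mp (Fintype.linearIndependent_iff.mp P.simples_indep _ hs ⟨δ, hδ⟩)

variable {P}

lemma isPosComb_zero : P.IsPosComb 0 := ⟨0, by simp⟩

lemma IsPosComb.add {u v : V} (hu : P.IsPosComb u) (hv : P.IsPosComb v) :
    P.IsPosComb (u + v) := by
  obtain ⟨c, rfl⟩ := hu
  obtain ⟨e, rfl⟩ := hv
  exact ⟨c + e, by simp [add_smul, Finset.sum_add_distrib]⟩

lemma IsPosComb.natCast_smul {v : V} (hv : P.IsPosComb v) (n : ℕ) :
    P.IsPosComb ((n : ℝ) • v) := by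
  obtain ⟨c, rfl⟩ := hv
  exact ⟨n • c, by simp [Finset.smul_sum, mul_smul]⟩

lemma isPosComb_of_mem_simples {δ : V} (hδ : δ ∈ P.simples) : P.IsPosComb δ := by
  classical
  exact ⟨fun x => if x = δ then 1 else 0, by simp [hδ]⟩

lemma IsPosCombOf.isPosComb_map {F : Type*} [FunLike F V V] [LinearMapClass F ℝ V V]
    {I : Finset V} {v : V} (hv : P.IsPosCombOf I v) {u : F}
    (hu : ∀ γ ∈ I, P.IsPosComb (u γ)) : P.IsPosComb (u v) := by
  obtain ⟨c, rfl⟩ := hv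
  rw [map_sum]
  refine Finset.sum_induction _ P.IsPosComb (fun _ _ => IsPosComb.add) isPosComb_zero
    fun γ hγ => ?_
  rw [map_smul]
  exact (hu γ hγ).natCast_smul (c γ)

lemma eq_zero_of_isPosComb_of_isPosComb_neg {v : V} (h : P.IsPosComb v)
    (h' : P.IsPosComb (-v)) : v = 0 := by
  obtain ⟨c, hc⟩ := h
  obtain ⟨e, he⟩ := h'
  have hsum : ∑ δ ∈ P.simples, ((c δ : ℝ) + e δ) • δ = ∑ δ ∈ P.simples, (0 : ℝ) • δ := by
    simp only [add_smul, Finset.sum_add_distrib, zero_smul, Finset.sum_const_zero, ← hc, ← he,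
      add_neg_cancel]
  have hc0 : ∀ δ ∈ P.simples, (c δ : ℝ) = 0 := fun δ hδ => by
    have := P.coeff_eq_of_sum_eq hsum hδ
    linarith [(c δ).cast_nonneg (α := ℝ), (e δ).cast_nonneg (α := ℝ)]
  rw [hc]
  exact Finset.sum_eq_zero fun δ hδ => by rw [hc0 δ hδ, zero_smul]

lemma neg_mem_roots {β : V} (hβ : β ∈ P.roots) : -β ∈ P.roots := by
  simpa [reflVec_self (P.root_ne_zero β hβ)] using P.reflect_mem β hβ β hβ

lemma neg_mem_neg_iff {β : V} : -β ∈ P.Neg ↔ β ∈ P.Pos := by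
  simp [Neg]

lemma mem_pos_or_mem_neg {β : V} (hβ : β ∈ P.roots) : β ∈ P.Pos ∨ β ∈ P.Neg :=
  (P.root_pos_or_neg β hβ).imp (fun h => ⟨hβ, h⟩) fun h => ⟨neg_mem_roots hβ, h⟩

lemma mem_roots_of_mem_neg {β : V} (hβ : β ∈ P.Neg) : β ∈ P.roots :=
  neg_neg β ▸ neg_mem_roots hβ.1

lemma not_isPosComb_of_mem_neg {β : V} (hβ : β ∈ P.Neg) : ¬ P.IsPosComb β := fun h =>
  P.root_ne_zero _ hβ.1 (by rw [eq_zero_of_isPosComb_of_isPosComb_neg h hβ.2, neg_zero])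

lemma notMem_neg_of_mem_pos {β : V} (hβ : β ∈ P.Pos) : β ∉ P.Neg := fun h =>
  not_isPosComb_of_mem_neg h hβ.2

lemma apply_mem_roots_iff_of_mem_weyl {w : V ≃ₗ[ℝ] V} (hw : w ∈ P.Weyl) (x : V) :
    w x ∈ P.roots ↔ x ∈ P.roots := by
  induction hw using Subgroup.closure_induction generalizing x with
  | mem _ hr =>
    obtain ⟨δ, hδ, rfl⟩ := hr
    have hδr := P.simples_subset hδ
    exact ⟨fun h => reflVec_reflVec δ x ▸ P.reflect_mem δ hδr _ h, P.reflect_mem δ hδr x⟩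
  | one => rfl
  | mul u v _ _ hu hv => rw [LinearEquiv.mul_apply, hu, hv]
  | inv u _ hu => rw [← hu, LinearEquiv.coe_inv, LinearEquiv.apply_symm_apply]

lemma wordProd_mem_weyl {m : List V} (hm : ∀ x ∈ m, x ∈ P.simples) : wordProd m ∈ P.Weyl := by
  refine Subgroup.list_prod_mem _ fun _ hx => ?_
  obtain ⟨δ, hδ, rfl⟩ := List.mem_map.mp hx
  exact Subgroup.subset_closure ⟨δ, hm δ hδ, rfl⟩

lemma exists_ne_coeff_ne_zero {β γ : V} (hβ : β ∈ P.simples) (hγ : γ ∈ P.roots) (hne : γ ≠ β)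
    {c : V → ℕ} (hc : γ = ∑ δ ∈ P.simples, (c δ : ℝ) • δ) :
    ∃ δ ∈ P.simples, δ ≠ β ∧ c δ ≠ 0 := by
  by_contra! h
  have hγβ : γ = (c β : ℝ) • β := by
    rw [hc, Finset.sum_eq_single β (fun δ hδ hδβ => by rw [h δ hδ hδβ, Nat.cast_zero, zero_smul])
      (absurd hβ)]
  rcases P.reduced β (P.simples_subset hβ) _ (hγβ ▸ hγ) with h1 | h1
  · exact hne (by rw [hγβ, h1, one_smul])
  · linarith [(c β).cast_nonneg (α := ℝ)]

lemma reflVec_mem_pos {β γ : V} (hβ : β ∈ P.simples) (hγ : γ ∈ P.Pos) (hne : γ ≠ β) :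
    reflVec β γ ∈ P.Pos := by
  classical
  obtain ⟨hγr, c, hc⟩ := hγ
  obtain ⟨δ₀, hδ₀, hδ₀β, hcδ₀⟩ := exists_ne_coeff_ne_zero hβ hγr hne hc
  refine (mem_pos_or_mem_neg (P.reflect_mem β (P.simples_subset hβ) γ hγr)).resolve_right
    fun ⟨_, e, he⟩ => ?_
  -- `s_β γ = γ - ⟨γ, β^∨⟩ β` keeps the coefficient `c δ₀ > 0` at `δ₀ ≠ β`
  have key : ∑ δ ∈ P.simples, ((c δ : ℝ) - if δ = β then cpair γ β else 0) • δ =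
      ∑ δ ∈ P.simples, (-(e δ : ℝ)) • δ := by
    simp only [sub_smul, ite_smul, zero_smul, neg_smul, Finset.sum_sub_distrib,
      Finset.sum_ite_eq', if_pos hβ, Finset.sum_neg_distrib, ← hc, ← he, reflVec_apply]
    abel
  have hcoeff := P.coeff_eq_of_sum_eq key hδ₀
  rw [if_neg hδ₀β, sub_zero] at hcoeff
  have : (0 : ℝ) < c δ₀ := by exact_mod_cast Nat.pos_of_ne_zero hcδ₀
  linarith [(e δ₀).cast_nonneg (α := ℝ)]

/-- The exchange condition. -/
lemma exists_eraseIdx_eq_wordProd_mul_reflVec {m : List V} (hm : ∀ x ∈ m, x ∈ P.simples)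
    {γ : V} (hγ : γ ∈ P.Pos) (h : wordProd m γ ∈ P.Neg) :
    ∃ j < m.length, wordProd m * reflVec γ = wordProd (m.eraseIdx j) := by
  induction m with
  | nil => exact absurd h (notMem_neg_of_mem_pos hγ)
  | cons a t ih =>
    have ht : ∀ x ∈ t, x ∈ P.simples := fun x hx => hm x (List.mem_cons_of_mem a hx)
    by_cases hneg : wordProd t γ ∈ P.Neg
    · obtain ⟨j, hj, he⟩ := ih ht hneg
      exact ⟨j + 1, by simpa using hj, by rw [List.eraseIdx_cons_succ, wordProd_cons,
        wordProd_cons, mul_assoc, he]⟩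
    have hpos : wordProd t γ ∈ P.Pos := by
      refine (mem_pos_or_mem_neg ?_).resolve_right hneg
      exact (apply_mem_roots_iff_of_mem_weyl (wordProd_mem_weyl ht) γ).mpr hγ.1
    have ha : wordProd t γ = a := by
      by_contra hne
      refine notMem_neg_of_mem_pos (reflVec_mem_pos (hm a List.mem_cons_self) hpos hne) ?_
      simpa using h
    refine ⟨0, by simp, ?_⟩
    rw [List.eraseIdx_cons_zero, wordProd_cons, ← ha, reflVec_map (inner_wordProd_wordProd t),
      inv_mul_cancel_right, mul_assoc, reflVec_mul_self, mul_one]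

lemma length_le {m : List V} {u : V ≃ₗ[ℝ] V} (h : P.IsWordOf P.simples m u) :
    P.length u ≤ m.length :=
  Nat.sInf_le ⟨m, h, rfl⟩

lemma exists_isReducedWord {m : List V} {u : V ≃ₗ[ℝ] V} (h : P.IsWordOf P.simples m u) :
    ∃ m', P.IsReducedWord m' u :=
  let ⟨m', hm', hlen⟩ := Nat.sInf_mem (⟨_, m, h, rfl⟩ : {n | ∃ l, P.IsWordOf P.simples l u ∧
    l.length = n}.Nonempty)
  ⟨m', hm', hlen⟩

lemma IsWordOf.reverse {I : Finset V} {m : List V} {u : V ≃ₗ[ℝ] V} (h : P.IsWordOf I m u) :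
    P.IsWordOf I m.reverse u⁻¹ :=
  ⟨fun x hx => h.1 x (List.mem_reverse.mp hx), by rw [← h.2]; exact wordProd_reverse m⟩

lemma IsReducedWord.reverse {m : List V} {u : V ≃ₗ[ℝ] V} (h : P.IsReducedWord m u) :
    P.IsReducedWord m.reverse u⁻¹ := by
  refine ⟨h.1.reverse, le_antisymm ?_ (length_le h.1.reverse)⟩
  obtain ⟨m', hm', hlen⟩ := exists_isReducedWord h.1.reverse
  rw [List.length_reverse, h.2, ← hlen]
  simpa using length_le hm'.reverse

lemma IsReducedWord.take {m : List V} {u : V ≃ₗ[ℝ] V} (h : P.IsReducedWord m u) (i : ℕ) :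
    P.IsReducedWord (m.take i) (wordProd (m.take i)) := by
  have hword : P.IsWordOf P.simples (m.take i) (wordProd (m.take i)) :=
    ⟨fun x hx => h.1.1 x (List.mem_of_mem_take hx), rfl⟩
  refine ⟨hword, le_antisymm ?_ (length_le hword)⟩
  obtain ⟨m', hm', hlen⟩ := exists_isReducedWord hword
  have hword' : P.IsWordOf P.simples (m' ++ m.drop i) u := by
    refine ⟨fun x hx => (List.mem_append.mp hx).elim (hm'.1 x) fun hx =>
      h.1.1 x (List.mem_of_mem_drop hx), ?_⟩
    rw [← h.1.2]
    change wordProd (m' ++ m.drop i) = wordProd m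
    rw [wordProd_append, show wordProd m' = _ from hm'.2, ← wordProd_append,
      List.take_append_drop]
  have := length_le hword'
  rw [← h.2, List.length_append, List.length_drop] at this
  rw [← hlen, List.length_take]
  omega

lemma IsReducedWord.wordProd_apply_mem_pos {m₁ m₂ : List V} {a : V} {u : V ≃ₗ[ℝ] V}
    (h : P.IsReducedWord (m₁ ++ a :: m₂) u) : wordProd m₁ a ∈ P.Pos := by
  have hs : ∀ x ∈ m₁ ++ a :: m₂, x ∈ P.simples := h.1.1
  have ha : a ∈ P.simples := hs a (by simp)
  have hm₁ : ∀ x ∈ m₁, x ∈ P.simples := fun x hx => hs x (by simp [hx])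
  have hapos : a ∈ P.Pos := ⟨P.simples_subset ha, isPosComb_of_mem_simples ha⟩
  refine (mem_pos_or_mem_neg ((apply_mem_roots_iff_of_mem_weyl (wordProd_mem_weyl hm₁) a).mpr
    hapos.1)).resolve_right fun hneg => ?_
  obtain ⟨j, hj, he⟩ := exists_eraseIdx_eq_wordProd_mul_reflVec hm₁ hapos hneg
  have hword : P.IsWordOf P.simples (m₁.eraseIdx j ++ m₂) u := by
    refine ⟨fun x hx => (List.mem_append.mp hx).elim (fun hx => hm₁ x
      (List.eraseIdx_subset hx)) fun hx => hs x (by simp [hx]), ?_⟩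
    rw [← h.1.2]
    change wordProd _ = wordProd _
    rw [wordProd_append, ← he, wordProd_append, wordProd_cons, mul_assoc]
  have := length_le hword
  simp only [← h.2, List.length_append, List.length_cons, List.length_eraseIdx_of_lt hj] at this
  omega

lemma IsReducedWord.wordProd_reverse_apply_mem_pos {m₁ m₂ : List V} {a : V} {u : V ≃ₗ[ℝ] V}
    (h : P.IsReducedWord (m₁ ++ a :: m₂) u) : wordProd m₂.reverse a ∈ P.Pos :=
  IsReducedWord.wordProd_apply_mem_pos (m₂ := m₁.reverse) (by simpa using h.reverse)

lemma IsReducedWord.inv_apply_mem_neg {m₁ m₂ : List V} {a : V} {u : V ≃ₗ[ℝ] V}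
    (h : P.IsReducedWord (m₁ ++ a :: m₂) u) : u⁻¹ (wordProd m₁ a) ∈ P.Neg := by
  have ha : a ≠ 0 := P.root_ne_zero a (P.simples_subset (h.1.1 a (by simp)))
  have hu : u⁻¹ = (wordProd m₂)⁻¹ * reflVec a * (wordProd m₁)⁻¹ := by
    rw [← h.1.2]
    change (wordProd _)⁻¹ = _
    rw [wordProd_append, wordProd_cons, mul_inv_rev, mul_inv_rev, reflVec_inv, mul_assoc]
  rw [hu, LinearEquiv.mul_apply, LinearEquiv.mul_apply,
    show (wordProd m₁)⁻¹ (wordProd m₁ a) = a from (wordProd m₁).symm_apply_apply a,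
    reflVec_self ha, map_neg, ← wordProd_reverse, neg_mem_neg_iff]
  exact h.wordProd_reverse_apply_mem_pos

lemma rootLE_reflVec_of_cpair_nonneg {x β : V} (hx : x ∈ P.roots) (hβ : β ∈ P.simples)
    (h : 0 ≤ cpair x β) : P.rootLE (reflVec β x) x := by
  obtain ⟨n, hn⟩ := P.pairing_int x hx β (P.simples_subset hβ)
  lift n to ℕ using (by exact_mod_cast hn ▸ h)
  rw [rootLE, reflVec_apply, sub_sub_cancel, ← hn, Int.cast_natCast]
  exact (isPosComb_of_mem_simples hβ).natCast_smul n

variable {α ϖ : V}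

lemma inner_fundamentalWeight_self (hα : α ∈ P.simples) (hfw : P.IsFundamentalWeight α ϖ) :
    ⟪ϖ, α⟫ = ⟪α, α⟫ / 2 := by
  have h := hfw.1
  rw [cpair, div_eq_one_iff_eq (inner_self_ne_zero.mpr (P.root_ne_zero α (P.simples_subset hα)))]
    at h
  linarith

lemma inner_fundamentalWeight_of_ne (hfw : P.IsFundamentalWeight α ϖ) {δ : V}
    (hδ : δ ∈ P.simples) (hδα : δ ≠ α) : ⟪ϖ, δ⟫ = 0 := by
  simpa [cpair, P.root_ne_zero δ (P.simples_subset hδ)] using hfw.2 δ hδ hδα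

lemma inner_fundamentalWeight_sum (hα : α ∈ P.simples) (hfw : P.IsFundamentalWeight α ϖ)
    (c : V → ℕ) : ⟪ϖ, ∑ δ ∈ P.simples, (c δ : ℝ) • δ⟫ = c α * (⟪α, α⟫ / 2) := by
  rw [inner_sum, Finset.sum_eq_single α (fun δ hδ hδα => by
    rw [real_inner_smul_right, inner_fundamentalWeight_of_ne hfw hδ hδα, mul_zero]) (absurd hα),
    real_inner_smul_right, inner_fundamentalWeight_self hα hfw]

variable [DecidableEq V]

/-- A positive root made negative by `w` has `α`-coefficient `1`. -/
lemma inner_fundamentalWeight_of_apply_mem_neg (hSL : P.SimplyLaced) (hα : α ∈ P.simples)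
    (hfw : P.IsFundamentalWeight α ϖ) (hmin : P.IsMinusculeWeight ϖ)
    {F : Type*} [FunLike F V V] [LinearMapClass F ℝ V V] {w : F}
    (hwI : ∀ γ ∈ P.simples.erase α, P.IsPosComb (w γ)) {ε : V} (hε : ε ∈ P.Pos)
    (hwε : w ε ∈ P.Neg) : ⟪ϖ, ε⟫ = ⟪α, α⟫ / 2 := by
  obtain ⟨hεr, c, hc⟩ := hε
  have hq : ⟪ε, ε⟫ = ⟪α, α⟫ := hSL ε hεr α (P.simples_subset hα)
  have hq0 : ⟪α, α⟫ ≠ 0 := inner_self_ne_zero.mpr (P.root_ne_zero α (P.simples_subset hα))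
  have hinner : ⟪ϖ, ε⟫ = c α * (⟪α, α⟫ / 2) := hc ▸ inner_fundamentalWeight_sum hα hfw c
  have hcpair : cpair ϖ ε = c α := by
    rw [cpair, hinner, hq]
    field_simp
  have hle : c α ≤ 1 := by exact_mod_cast hcpair ▸ hmin ε ⟨hεr, c, hc⟩
  have hne : c α ≠ 0 := fun h0 => by
    have hI : P.IsPosCombOf (P.simples.erase α) ε :=
      ⟨c, by rw [hc, Finset.sum_erase P.simples (a := α) (by simp [h0])]⟩
    exact not_isPosComb_of_mem_neg hwε (hI.isPosComb_map hwI)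
  rw [hinner, show c α = 1 by omega, Nat.cast_one, one_mul]

lemma add_notMem_roots_of_apply_mem_neg (hSL : P.SimplyLaced) (hα : α ∈ P.simples)
    (hfw : P.IsFundamentalWeight α ϖ) (hmin : P.IsMinusculeWeight ϖ)
    {F : Type*} [FunLike F V V] [LinearMapClass F ℝ V V] {w : F}
    (hwI : ∀ γ ∈ P.simples.erase α, P.IsPosComb (w γ)) {ε ε' : V}
    (hε : ε ∈ P.Pos) (hwε : w ε ∈ P.Neg) (hε' : ε' ∈ P.Pos) (hwε' : w ε' ∈ P.Neg) :
    ε + ε' ∉ P.roots := fun hr => by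
  have hq0 : ⟪α, α⟫ ≠ 0 := inner_self_ne_zero.mpr (P.root_ne_zero α (P.simples_subset hα))
  have h := hmin _ ⟨hr, hε.2.add hε'.2⟩
  rw [cpair, inner_add_right, inner_fundamentalWeight_of_apply_mem_neg hSL hα hfw hmin hwI hε hwε,
    inner_fundamentalWeight_of_apply_mem_neg hSL hα hfw hmin hwI hε' hwε',
    hSL _ hr α (P.simples_subset hα), add_halves, mul_div_assoc, div_self hq0] at h
  norm_num at h

lemma cpair_nonneg_of_inv_apply_mem_neg (hSL : P.SimplyLaced) (hα : α ∈ P.simples)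
    (hfw : P.IsFundamentalWeight α ϖ) (hmin : P.IsMinusculeWeight ϖ)
    {w : V ≃ₗ[ℝ] V} (hw : w ∈ P.Weyl) (hwI : ∀ γ ∈ P.simples.erase α, P.IsPosComb (w γ))
    {β β' : V} (hβ : β ∈ P.Pos) (hwβ : w⁻¹ β ∈ P.Neg) (hβ' : β' ∈ P.Pos)
    (hwβ' : w⁻¹ β' ∈ P.Neg) : 0 ≤ cpair β β' := by
  obtain ⟨n, hn⟩ := P.pairing_int β hβ.1 β' hβ'.1
  have hq : ⟪β, β⟫ = ⟪β', β'⟫ := hSL β hβ.1 β' hβ'.1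
  have hβ'0 : β' ≠ 0 := P.root_ne_zero β' hβ'.1
  have hn2 : -2 ≤ n := by exact_mod_cast hn ▸ neg_two_le_cpair hq hβ'0
  suffices 0 ≤ n by rw [← hn]; exact_mod_cast this
  by_contra! hneg
  obtain rfl | rfl : n = -2 ∨ n = -1 := by omega
  · have := eq_neg_of_cpair_eq_neg_two hq hβ'0 (by rw [← hn]; norm_num)
    exact notMem_neg_of_mem_pos hβ' (show -β' ∈ P.Pos from this ▸ hβ)
  · have hsum : β + β' ∈ P.roots := by
      simpa [reflVec_apply, ← hn] using P.reflect_mem β' hβ'.1 β hβ.1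
    have hwinv (x : V) : w (-(w⁻¹ x)) = -x := by simp
    refine add_notMem_roots_of_apply_mem_neg hSL hα hfw hmin hwI hwβ ?_ hwβ' ?_ ?_
    · rw [hwinv, neg_mem_neg_iff]; exact hβ
    · rw [hwinv, neg_mem_neg_iff]; exact hβ'
    · rw [← neg_add, ← map_add]
      exact neg_mem_roots ((apply_mem_roots_iff_of_mem_weyl (inv_mem hw) _).mpr hsum)

end RootSystemData

theorem gamma_neg_and_antitone_general [DecidableEq V] (P : RootSystemData V)
    (hSL : P.SimplyLaced)
    (α : V) (hα : α ∈ P.simples) (ϖ : V)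
    (hfw : P.IsFundamentalWeight α ϖ) (hmin : P.IsMinusculeWeight ϖ)
    (w : V ≃ₗ[ℝ] V) (hw : w ∈ P.Weyl)
    (hWI : ∀ γ ∈ P.simples.erase α, w γ ∈ P.Pos)
    (l : List V) (hl : P.IsReducedWord l w) (hne : l ≠ []) :
    (∀ i : ℕ, 1 ≤ i → i ≤ l.length →
      (((l.take i).reverse.map reflVec).prod) (l.head hne) ∈ P.Neg) ∧
    (∀ i : ℕ, 1 ≤ i → i + 1 ≤ l.length →
      P.rootLE ((((l.take (i + 1)).reverse.map reflVec).prod) (l.head hne))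
               ((((l.take i).reverse.map reflVec).prod) (l.head hne))) := by
  obtain ⟨b, t, rfl⟩ := List.exists_cons_of_ne_nil hne
  have hγ (j : ℕ) : (wordProd ((b :: t).take (j + 1)))⁻¹ b ∈ P.Neg :=
    (hl.take (j + 1)).inv_apply_mem_neg (m₁ := [])
  refine ⟨fun i hi _ => ?_, fun i hi hil => ?_⟩ <;>
    obtain ⟨j, rfl⟩ : ∃ j, i = j + 1 := ⟨i - 1, by omega⟩
  · have h := hγ j
    rw [← wordProd_reverse] at h
    exact h
  have hj : j + 1 < (b :: t).length := by omega
  set m := (b :: t).take (j + 1)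
  set c := (b :: t)[j + 1]
  have hsplit : P.IsReducedWord (m ++ c :: (b :: t).drop (j + 2)) w := by
    rwa [← List.drop_eq_getElem_cons, List.take_append_drop]
  change P.rootLE (wordProd ((b :: t).take (j + 2)).reverse b) (wordProd m.reverse b)
  rw [← List.take_append_getElem hj, wordProd_reverse, wordProd_reverse, wordProd_append,
    wordProd_cons, wordProd_nil, mul_one, mul_inv_rev, reflVec_inv, LinearEquiv.mul_apply]
  refine RootSystemData.rootLE_reflVec_of_cpair_nonneg
    (RootSystemData.mem_roots_of_mem_neg (hγ j)) (hl.1.1 c (List.getElem_mem hj)) ?_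
  rw [← cpair_map (inner_wordProd_wordProd m), LinearEquiv.coe_inv, LinearEquiv.apply_symm_apply]
  exact RootSystemData.cpair_nonneg_of_inv_apply_mem_neg hSL hα hfw hmin hw
    (fun γ hγ => (hWI γ hγ).2) (hl.wordProd_apply_mem_pos (m₁ := []))
    (hl.inv_apply_mem_neg (m₁ := [])) hsplit.wordProd_apply_mem_pos hsplit.inv_apply_mem_neg

/-- With `v_i := s_{β_i} ⋯ s_{β_1}` and `γ_i := v_i(β_1)` for a reduced
decomposition `w = s_{β_1} ⋯ s_{β_r}` of a minimal coset representative `w` in the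
minuscule situation, each `γ_i` is a negative root and `γ_{i+1} ≤ γ_i`. -/
theorem gamma_neg_and_antitone [DecidableEq V] (P : RootSystemData V)
    (hSL : P.SimplyLaced) (hirr : P.Irred)
    (α : V) (hα : α ∈ P.simples) (ϖ : V)
    (hfw : P.IsFundamentalWeight α ϖ) (hmin : P.IsMinusculeWeight ϖ)
    (w : V ≃ₗ[ℝ] V) (hw : w ∈ P.Weyl)
    (hWI : ∀ γ ∈ P.simples.erase α, w γ ∈ P.Pos)
    (l : List V) (hl : P.IsReducedWord l w) (hne : l ≠ []) :
    (∀ i : ℕ, 1 ≤ i → i ≤ l.length →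
      (((l.take i).reverse.map reflVec).prod) (l.head hne) ∈ P.Neg) ∧
    (∀ i : ℕ, 1 ≤ i → i + 1 ≤ l.length →
      P.rootLE ((((l.take (i + 1)).reverse.map reflVec).prod) (l.head hne))
               ((((l.take i).reverse.map reflVec).prod) (l.head hne))) :=
  gamma_neg_and_antitone_general P hSL α hα ϖ hfw hmin w hw hWI l hl hne
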